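/- For ζ = x + iy ∈ ℂ and q ∈ ℂ with |q| < 1, the identity ϑ₃(ζ,q)·ϑ₃(ζ̄,q) + ϑ₄(ζ,q)·ϑ₄(ζ̄,q) = 2 Σ_{(u,v)∈ℤ²} e^{4iux} e^{4iv·iy} q^{2u² + 2v²} holds, where ϑ₃(ζ,q) = Σ_k e^{2kiζ} q^{k²} and ϑ₄(ζ,q) = Σ_k (−1)^k e^{2kiζ} q^{k²}. -/

import Mathlib

open Complex

/-- `ϑ₃(ζ, q) = Σ_k e^{2kiζ} q^{k²}`. -/
noncomputable def theta3 (ζ q : ℂ) : ℂ :=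
  ∑' k : ℤ, Complex.exp (2 * (k : ℂ) * Complex.I * ζ) * q ^ (k ^ 2)

/-- `ϑ₄(ζ, q) = Σ_k (−1)^k e^{2kiζ} q^{k²}`. -/
noncomputable def theta4 (ζ q : ℂ) : ℂ :=
  ∑' k : ℤ, (-1 : ℂ) ^ k * Complex.exp (2 * (k : ℂ) * Complex.I * ζ) * q ^ (k ^ 2)

/-!
Expanding both products as double series over `ℤ²`, the signs `(-1)^(j+k)` of the `ϑ₄`-product
cancel the terms with `j + k` odd and double those with `j + k` even. The even pairs are exactly
`(u + v, u - v)`, and for `ζ = x + iy` the term indexed by it is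
`e^{2(u+v)iζ} e^{2(u-v)iζ̄} q^{(u+v)² + (u-v)²} = e^{4iux} e^{4iv·iy} q^{2u² + 2v²}`.
Everything converges absolutely: `|e^{2kiζ} q^{k²}| = e^{-2yk} |q|^{k²}`, whose `|k|`-th root
tends to `0`.
-/

lemma zpow_add_of_nonneg₀ {G₀ : Type*} [GroupWithZero G₀] (a : G₀) {m n : ℤ} (hm : 0 ≤ m)
    (hn : 0 ≤ n) : a ^ (m + n) = a ^ m * a ^ n := by
  lift m to ℕ using hm
  lift n to ℕ using hn
  exact_mod_cast pow_add a m n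

lemma summable_exp_mul_mul_pow_sq (c : ℝ) {r : ℝ} (hr₀ : 0 ≤ r) (hr₁ : r < 1) :
    Summable fun n : ℕ => Real.exp (c * n) * r ^ (n ^ 2) := by
  have hsmall : ∀ᶠ n : ℕ in Filter.atTop, Real.exp c * r ^ n ≤ 1 / 2 := by
    have := (tendsto_pow_atTop_nhds_zero_of_lt_one hr₀ hr₁).const_mul (Real.exp c)
    rw [mul_zero] at this
    exact this.eventually_le_const (by norm_num)
  refine summable_geometric_two.of_norm_bounded_eventually_nat ?_
  filter_upwards [hsmall] with n hn
  have hroot : Real.exp (c * n) * r ^ (n ^ 2) = (Real.exp c * r ^ n) ^ n := by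
    rw [mul_pow, ← Real.exp_nat_mul, sq, pow_mul, mul_comm (n : ℝ)]
  rw [hroot, norm_pow, Real.norm_of_nonneg (by positivity)]
  exact pow_le_pow_left₀ (by positivity) hn n

lemma summable_exp_mul_mul_zpow_sq (c : ℝ) {r : ℝ} (hr₀ : 0 ≤ r) (hr₁ : r < 1) :
    Summable fun k : ℤ => Real.exp (c * k) * r ^ (k ^ 2) := by
  apply Summable.of_nat_of_neg
  · simpa [← zpow_natCast] using summable_exp_mul_mul_pow_sq c hr₀ hr₁
  · simpa [← zpow_natCast] using summable_exp_mul_mul_pow_sq (-c) hr₀ hr₁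

lemma tsum_add_sub_eq_tsum_of_forall_odd_eq_zero {α : Type*} [AddCommMonoid α]
    [TopologicalSpace α] {F : ℤ × ℤ → α} (hF : ∀ p : ℤ × ℤ, Odd (p.1 + p.2) → F p = 0) :
    ∑' w : ℤ × ℤ, F (w.1 + w.2, w.1 - w.2) = ∑' p, F p := by
  refine Function.Injective.tsum_eq (g := fun w : ℤ × ℤ => (w.1 + w.2, w.1 - w.2)) ?_ ?_
  · rintro ⟨u, v⟩ ⟨u', v'⟩ h
    simp only [Prod.mk.injEq] at h ⊢
    omega
  · intro p hp
    obtain ⟨t, ht⟩ := Int.not_odd_iff_even.mp fun hodd => hp (hF p hodd)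
    exact ⟨(t, p.1 - t), by ext <;> simp only <;> omega⟩

section SignedPairing

variable {𝕜 : Type*} [NormedField 𝕜] [CompleteSpace 𝕜] {a b : ℤ → 𝕜}

lemma tsum_mul_tsum_add_tsum_mul_tsum_neg_one_zpow (ha : Summable (‖a ·‖))
    (hb : Summable (‖b ·‖)) :
    (∑' j, a j) * (∑' k, b k) + (∑' j, (-1) ^ j * a j) * (∑' k, (-1) ^ k * b k) =
      ∑' p : ℤ × ℤ, (1 + (-1) ^ (p.1 + p.2)) * (a p.1 * b p.2) := by
  have ha' : Summable fun j => ‖(-1) ^ j * a j‖ := by simpa [norm_zpow] using ha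
  have hb' : Summable fun k => ‖(-1) ^ k * b k‖ := by simpa [norm_zpow] using hb
  rw [tsum_mul_tsum_of_summable_norm ha hb, tsum_mul_tsum_of_summable_norm ha' hb',
    ← (summable_mul_of_summable_norm ha hb).tsum_add (summable_mul_of_summable_norm ha' hb')]
  congr with p
  rw [zpow_add₀ (by norm_num)]
  ring

lemma tsum_mul_tsum_add_tsum_mul_tsum_neg_one_zpow_eq_two_mul (ha : Summable (‖a ·‖))
    (hb : Summable (‖b ·‖)) :
    (∑' j, a j) * (∑' k, b k) + (∑' j, (-1) ^ j * a j) * (∑' k, (-1) ^ k * b k) =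
      2 * ∑' w : ℤ × ℤ, a (w.1 + w.2) * b (w.1 - w.2) := by
  rw [tsum_mul_tsum_add_tsum_mul_tsum_neg_one_zpow ha hb,
    ← tsum_add_sub_eq_tsum_of_forall_odd_eq_zero, ← tsum_mul_left]
  · congr with w
    rw [show w.1 + w.2 + (w.1 - w.2) = 2 * w.1 by ring, zpow_mul]
    norm_num
  · intro p hp
    rw [hp.neg_one_zpow]
    ring

end SignedPairing

noncomputable def thetaTerm (ζ q : ℂ) (k : ℤ) : ℂ :=
  exp (2 * k * I * ζ) * q ^ (k ^ 2)

lemma theta3_eq_tsum_thetaTerm (ζ q : ℂ) : theta3 ζ q = ∑' k, thetaTerm ζ q k := rfl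

lemma theta4_eq_tsum_neg_one_zpow_mul_thetaTerm (ζ q : ℂ) :
    theta4 ζ q = ∑' k : ℤ, (-1) ^ k * thetaTerm ζ q k := by
  simp only [theta4, thetaTerm, mul_assoc]

lemma norm_thetaTerm (ζ q : ℂ) (k : ℤ) :
    ‖thetaTerm ζ q k‖ = Real.exp (-2 * ζ.im * k) * ‖q‖ ^ (k ^ 2) := by
  rw [thetaTerm, norm_mul, norm_exp, norm_zpow]
  congr 2
  simp only [mul_re, mul_im, re_ofNat, im_ofNat, intCast_re, intCast_im, I_re, I_im, mul_zero,
    zero_mul, mul_one, sub_zero, add_zero, sub_self, zero_sub, neg_mul, neg_inj]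
  ring

lemma summable_norm_thetaTerm (ζ : ℂ) {q : ℂ} (hq : ‖q‖ < 1) :
    Summable (‖thetaTerm ζ q ·‖) := by
  simpa only [norm_thetaTerm] using summable_exp_mul_mul_zpow_sq _ (norm_nonneg q) hq

lemma thetaTerm_add_mul_thetaTerm_sub (x y : ℝ) (q : ℂ) (u v : ℤ) :
    thetaTerm (x + y * I) q (u + v) * thetaTerm (x - y * I) q (u - v) =
      exp (4 * I * u * x) * exp (4 * I * v * (I * y)) * q ^ (2 * u ^ 2 + 2 * v ^ 2) := by
  have hexp : q ^ (2 * u ^ 2 + 2 * v ^ 2) = q ^ ((u + v) ^ 2) * q ^ ((u - v) ^ 2) := by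
    rw [← zpow_add_of_nonneg₀ q (sq_nonneg _) (sq_nonneg _)]
    ring_nf
  rw [thetaTerm, thetaTerm, hexp, mul_mul_mul_comm, ← exp_add, ← exp_add]
  push_cast
  ring_nf

/-- For `ζ = x + iy` and `|q| < 1`, `ϑ₃(ζ)ϑ₃(ζ̄) + ϑ₄(ζ)ϑ₄(ζ̄)
= 2 Σ_{(u,v)} e^{4iux} e^{4iv·iy} q^{2u² + 2v²}`. -/
theorem theta34_product_sum (x y : ℝ) (q : ℂ) (hq : ‖q‖ < 1) :
    theta3 ((x : ℂ) + (y : ℂ) * Complex.I) q * theta3 ((x : ℂ) - (y : ℂ) * Complex.I) q +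
      theta4 ((x : ℂ) + (y : ℂ) * Complex.I) q * theta4 ((x : ℂ) - (y : ℂ) * Complex.I) q =
    2 * ∑' p : ℤ × ℤ,
      Complex.exp (4 * Complex.I * (p.1 : ℂ) * (x : ℂ)) *
        Complex.exp (4 * Complex.I * (p.2 : ℂ) * (Complex.I * (y : ℂ))) *
        q ^ (2 * p.1 ^ 2 + 2 * p.2 ^ 2) := by
  simp only [theta3_eq_tsum_thetaTerm, theta4_eq_tsum_neg_one_zpow_mul_thetaTerm]
  rw [tsum_mul_tsum_add_tsum_mul_tsum_neg_one_zpow_eq_two_mul (summable_norm_thetaTerm _ hq)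
    (summable_norm_thetaTerm _ hq)]
  simp only [thetaTerm_add_mul_thetaTerm_sub]
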